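/- arXiv:1403.1821 — 4 statements merged into one kernel-verified Lean document; each statement's English description precedes it below -/
import Mathlib

section
/- The modified Hopf transform f = m(u^{m−1} − 1)/(m − 1) of a smooth positive solution u of ∂_t u = L(u^m) satisfies the transformed parabolic equation ∂_t f = ((m−1)f + m)·Lf + |∇f|² at every point of (0,∞) × ℝ^d. -/
noncomputable section

open Real Set Filter

abbrev Esp (d : ℕ) := EuclideanSpace ℝ (Fin d)

/-- The Euclidean Laplacian, acting in the space variable. -/
def lap {d : ℕ} (h : Esp d → ℝ) (x : Esp d) : ℝ :=
  ∑ i, fderiv ℝ (fun y => fderiv ℝ h y (EuclideanSpace.single i (1:ℝ))) x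
    (EuclideanSpace.single i (1:ℝ))

/-- The operator `L h = Δ h + ⟨V, ∇h⟩`. -/
def Lop {d : ℕ} (V : Esp d → Esp d) (h : Esp d → ℝ) (x : Esp d) : ℝ :=
  lap h x + (inner ℝ (V x) (gradient h x) : ℝ)

/-- `Γ₂(h) = (1/2) L(|∇h|²) − ⟨∇h, ∇(Lh)⟩`. -/
def Gamma2 {d : ℕ} (V : Esp d → Esp d) (h : Esp d → ℝ) (x : Esp d) : ℝ :=
  (1/2) * Lop V (fun y => ‖gradient h y‖^2) x
    - (inner ℝ (gradient h x) (gradient (Lop V h) x) : ℝ)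

/-- Curvature–dimension condition `CD(n, −K)` for `L = Δ + V·∇`:
`Γ₂(h) ≥ (1/n)(Lh)² − K|∇h|²` for every smooth `h`. -/
def CD {d : ℕ} (V : Esp d → Esp d) (n K : ℝ) : Prop :=
  ∀ h : Esp d → ℝ, ContDiff ℝ (⊤ : ℕ∞) h →
    ∀ x, Gamma2 V h x ≥ (1/n) * (Lop V h x)^2 - K * ‖gradient h x‖^2

lemma fderiv_eq_inner_gradient {d : ℕ} (w : Esp d → ℝ) (x v : Esp d) :
    fderiv ℝ w x v = (inner ℝ (gradient w x) v : ℝ) := by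
  simp [gradient, ← InnerProductSpace.toDual_apply_apply]

lemma sum_sq_fderiv {d : ℕ} (w : Esp d → ℝ) (x : Esp d) :
    ∑ i, (fderiv ℝ w x (EuclideanSpace.single i (1:ℝ)))^2 = ‖gradient w x‖^2 := by
  rw [← real_inner_self_eq_norm_sq, PiLp.inner_apply]
  refine Finset.sum_congr rfl fun i _ => ?_
  rw [fderiv_eq_inner_gradient, EuclideanSpace.inner_single_right]
  simp [sq]

lemma grad_smul_eq {d : ℕ} (w g : Esp d → ℝ) (x : Esp d) (c : ℝ)
    (h : fderiv ℝ g x = c • fderiv ℝ w x) : gradient g x = c • gradient w x := by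
  simp only [gradient, h, map_smul]

lemma lop_comp {d : ℕ} (V : Esp d → Esp d) (w : Esp d → ℝ) (ψ ψ₁ ψ₂ : ℝ → ℝ) (x : Esp d)
    (hw : ContDiffAt ℝ (⊤ : ℕ∞) w x) (hpos : 0 < w x)
    (hψ : ∀ s : ℝ, 0 < s → HasDerivAt ψ (ψ₁ s) s)
    (hψ₁ : ∀ s : ℝ, 0 < s → HasDerivAt ψ₁ (ψ₂ s) s) :
    gradient (fun y => ψ (w y)) x = ψ₁ (w x) • gradient w x ∧
    Lop V (fun y => ψ (w y)) x = ψ₁ (w x) * Lop V w x + ψ₂ (w x) * ‖gradient w x‖^2 := by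
  have hw2 : ContDiffAt ℝ 2 w x := hw.of_le (WithTop.coe_le_coe.mpr le_top)
  have hwdx : DifferentiableAt ℝ w x := hw2.differentiableAt (by norm_num)
  have hposev : ∀ᶠ y in nhds x, 0 < w y :=
    (hw2.continuousAt).eventually_mem (Ioi_mem_nhds hpos)
  have hdiffev : ∀ᶠ y in nhds x, DifferentiableAt ℝ w y :=
    (hw2.eventually (by norm_num)).mono fun y hy => hy.differentiableAt (by norm_num)
  have hfe : ∀ᶠ y in nhds x, fderiv ℝ (fun z => ψ (w z)) y = ψ₁ (w y) • fderiv ℝ w y := by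
    filter_upwards [hposev, hdiffev] with y h1 h2
    exact ((hψ _ h1).comp_hasFDerivAt y h2.hasFDerivAt).fderiv
  have hfx : fderiv ℝ (fun z => ψ (w z)) x = ψ₁ (w x) • fderiv ℝ w x :=
    ((hψ _ hpos).comp_hasFDerivAt x hwdx.hasFDerivAt).fderiv
  have hgrad : gradient (fun y => ψ (w y)) x = ψ₁ (w x) • gradient w x :=
    grad_smul_eq _ _ _ _ hfx
  refine ⟨hgrad, ?_⟩
  have hfd : ContDiffAt ℝ 1 (fderiv ℝ w) x := hw2.fderiv_right (by norm_num)
  have hlap : lap (fun y => ψ (w y)) x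
      = ψ₁ (w x) * lap w x + ψ₂ (w x) * ∑ i, (fderiv ℝ w x (EuclideanSpace.single i (1:ℝ)))^2 := by
    unfold lap
    rw [Finset.mul_sum, Finset.mul_sum, ← Finset.sum_add_distrib]
    refine Finset.sum_congr rfl fun i _ => ?_
    set e := EuclideanSpace.single i (1:ℝ) with he
    have hD : DifferentiableAt ℝ (fun y => fderiv ℝ w y e) x :=
      (ContinuousLinearMap.apply ℝ ℝ e).differentiableAt.comp x (hfd.differentiableAt one_ne_zero)
    have h1 : fderiv ℝ (fun y => fderiv ℝ (fun z => ψ (w z)) y e) x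
        = fderiv ℝ (fun y => ψ₁ (w y) * fderiv ℝ w y e) x := by
      refine Filter.EventuallyEq.fderiv_eq (hfe.mono fun y hy => ?_)
      show (fderiv ℝ (fun z => ψ (w z)) y) e = ψ₁ (w y) * (fderiv ℝ w y) e
      rw [hy]; simp
    have hg : HasFDerivAt (fun y => ψ₁ (w y)) ((ψ₂ (w x)) • fderiv ℝ w x) x :=
      (hψ₁ _ hpos).comp_hasFDerivAt x hwdx.hasFDerivAt
    have hmul : HasFDerivAt (fun y => ψ₁ (w y) * fderiv ℝ w y e) _ x := hg.mul hD.hasFDerivAt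
    rw [h1, hmul.fderiv]
    simp only [ContinuousLinearMap.add_apply, ContinuousLinearMap.smul_apply, smul_eq_mul]
    ring
  have hinner : (inner ℝ (V x) (gradient (fun y => ψ (w y)) x) : ℝ)
      = ψ₁ (w x) * (inner ℝ (V x) (gradient w x) : ℝ) := by
    rw [hgrad, real_inner_smul_right]
  unfold Lop
  rw [hlap, hinner, sum_sq_fderiv]
  ring

/-- The modified Hopf transform `f = m(u^{m−1} − 1)/(m−1)` satisfies
`∂_t f = ((m−1)f + m)·Lf + |∇f|²`. -/
theorem hopf_transform_parabolic_equation
    {d : ℕ} (hd : 1 ≤ d) (V : Esp d → Esp d) (hV : ContDiff ℝ (⊤ : ℕ∞) V)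
    (m : ℝ) (hm0 : 0 < m) (hm1 : m ≠ 1)
    (u : ℝ → Esp d → ℝ)
    (hu_smooth : ContDiffOn ℝ (⊤ : ℕ∞) (fun p : ℝ × Esp d => u p.1 p.2) (Set.Ioi 0 ×ˢ Set.univ))
    (hu_pos : ∀ t, 0 < t → ∀ x, 0 < u t x)
    (hu_pde : ∀ t, 0 < t → ∀ x,
      deriv (fun s => u s x) t = Lop V (fun y => u t y ^ m) x)
    (f : ℝ → Esp d → ℝ)
    (hf : ∀ t x, f t x = m * (u t x ^ (m-1) - 1) / (m-1)) :
    ∀ t, 0 < t → ∀ x : Esp d,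
      deriv (fun s => f s x) t
        = ((m-1) * f t x + m) * Lop V (f t) x + ‖gradient (f t) x‖^2 := by
  intro t ht x
  have hm1' : m - 1 ≠ 0 := sub_ne_zero.mpr hm1
  have ha : 0 < u t x := hu_pos t ht x
  -- derivative facts for the scalar functions
  have hψ : ∀ s : ℝ, 0 < s → HasDerivAt (fun r : ℝ => m * (r ^ (m-1) - 1) / (m-1)) (m * s ^ (m-2)) s := by
    intro s hs
    have h0 := (((Real.hasDerivAt_rpow_const (p := m-1) (Or.inl hs.ne')).sub_const 1).const_mul m).div_const (m-1)
    refine h0.congr_deriv ?_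
    rw [show m - 1 - 1 = m - 2 by ring]
    field_simp
  have hψ₁ : ∀ s : ℝ, 0 < s → HasDerivAt (fun r : ℝ => m * r ^ (m-2)) (m * (m-2) * s ^ (m-3)) s := by
    intro s hs
    have h0 := (Real.hasDerivAt_rpow_const (p := m-2) (Or.inl hs.ne')).const_mul m
    refine h0.congr_deriv ?_
    rw [show m - 2 - 1 = m - 3 by ring]
    ring
  have hφ : ∀ s : ℝ, 0 < s → HasDerivAt (fun r : ℝ => r ^ m) (m * s ^ (m-1)) s :=
    fun s hs => Real.hasDerivAt_rpow_const (Or.inl hs.ne')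
  have hφ₁ : ∀ s : ℝ, 0 < s → HasDerivAt (fun r : ℝ => m * r ^ (m-1)) (m * (m-1) * s ^ (m-2)) s := by
    intro s hs
    have h0 := (Real.hasDerivAt_rpow_const (p := m-1) (Or.inl hs.ne')).const_mul m
    refine h0.congr_deriv ?_
    rw [show m - 1 - 1 = m - 2 by ring]
    ring
  -- smoothness
  have hopen : IsOpen (Set.Ioi (0:ℝ) ×ˢ (Set.univ : Set (Esp d))) := isOpen_Ioi.prod isOpen_univ
  have hjoint : ContDiffAt ℝ (⊤ : ℕ∞) (fun p : ℝ × Esp d => u p.1 p.2) (t, x) :=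
    hu_smooth.contDiffAt (hopen.mem_nhds (by simp [ht]))
  have hw : ContDiffAt ℝ (⊤ : ℕ∞) (u t) x :=
    hjoint.comp x ((contDiff_const.prodMk contDiff_id).contDiffAt)
  have hut : ContDiffAt ℝ (⊤ : ℕ∞) (fun s => u s x) t :=
    hjoint.comp t ((contDiff_id.prodMk contDiff_const).contDiffAt)
  have hudiff : DifferentiableAt ℝ (fun s => u s x) t :=
    (hut.of_le (by simp) : ContDiffAt ℝ 1 _ t).differentiableAt one_ne_zero
  -- main pieces
  obtain ⟨hgrad, hlop⟩ := lop_comp V (u t) (fun r => m * (r ^ (m-1) - 1) / (m-1))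
    (fun r => m * r ^ (m-2)) (fun r => m * (m-2) * r ^ (m-3)) x hw ha hψ hψ₁
  obtain ⟨-, hlopφ⟩ := lop_comp V (u t) (fun r => r ^ m)
    (fun r => m * r ^ (m-1)) (fun r => m * (m-1) * r ^ (m-2)) x hw ha hφ hφ₁
  have hfun : f t = fun y => m * ((u t y) ^ (m-1) - 1) / (m-1) := funext fun y => hf t y
  set a := u t x with ha_def
  set P := Lop V (u t) x with hP
  set N := ‖gradient (u t) x‖^2 with hN
  have hderiv : deriv (fun s => f s x) t = m * a ^ (m-2) * deriv (fun s => u s x) t := by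
    have h := (hψ a ha).comp t hudiff.hasDerivAt
    have heq : (fun s => f s x) = fun s => m * ((u s x) ^ (m-1) - 1) / (m-1) :=
      funext fun s => hf s x
    rw [heq]
    exact h.deriv
  have e1 : f t x = m * (a ^ (m-1) - 1) / (m-1) := hf t x
  have e2 : Lop V (f t) x = m * a ^ (m-2) * P + m * (m-2) * a ^ (m-3) * N := by
    rw [hfun]; exact hlop
  have e3 : ‖gradient (f t) x‖^2 = (m * a ^ (m-2))^2 * N := by
    rw [hfun, hgrad, norm_smul, mul_pow, Real.norm_eq_abs, sq_abs]
  have e4 : Lop V (fun y => u t y ^ m) x = m * a ^ (m-1) * P + m * (m-1) * a ^ (m-2) * N := hlopφ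
  rw [hderiv, hu_pde t ht x, e4, e1, e2, e3]
  have hcoef : (m-1) * (m * (a ^ (m-1) - 1) / (m-1)) + m = m * a ^ (m-1) := by
    field_simp
    ring
  rw [hcoef]
  have hkey : a ^ (m-1) * a ^ (m-3) = a ^ (m-2) * a ^ (m-2) := by
    rw [← Real.rpow_add ha, ← Real.rpow_add ha, show m - 1 + (m - 3) = m - 2 + (m - 2) by ring]
  linear_combination (-(m^2) * (m-2) * N) * hkey
end
end

section
/- The function Y = (∂_t f)/U satisfies the evolution equation (A − ∂_t)Y = −(m−1)·Y² at every point of (0,∞) × ℝ^d. -/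
noncomputable section

open Real Set Filter

/-- The operator `A h = U·Lh + 2m⟨∇f, ∇h⟩` (at a fixed time, with coefficient
functions `Ut = U(t,·)` and `ft = f(t,·)`). -/
def Aop {d : ℕ} (V : Esp d → Esp d) (m : ℝ) (Ut ft h : Esp d → ℝ) (x : Esp d) : ℝ :=
  Ut x * Lop V h x + 2*m*(inner ℝ (gradient ft x) (gradient h x) : ℝ)

open Topology
open scoped ContDiff

namespace EvoY

variable {d : ℕ}
def ee (i : Fin d) : Esp d := EuclideanSpace.single i (1:ℝ)
def Pd (i : Fin d) (h : Esp d → ℝ) (x : Esp d) : ℝ := fderiv ℝ h x (ee i)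
lemma lap_eq (h : Esp d → ℝ) (x : Esp d) : lap h x = ∑ i, Pd i (Pd i h) x := rfl

lemma inner_gradient (h : Esp d → ℝ) (x w : Esp d) :
    (inner ℝ (gradient h x) w : ℝ) = fderiv ℝ h x w := by
  simp [gradient, InnerProductSpace.toDual_symm_apply]

lemma vec_eq_sum (v : Esp d) : v = ∑ i, v i • ee i := by
  ext j; rw [WithLp.ofLp_sum, Fintype.sum_apply]; simp [ee, EuclideanSpace.single_apply]

lemma fderiv_apply_eq_sum (h : Esp d → ℝ) (x v : Esp d) :
    fderiv ℝ h x v = ∑ i, v i * Pd i h x := by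
  conv_lhs => rw [vec_eq_sum v]
  rw [map_sum]; simp [Pd, smul_eq_mul]

lemma grad_coord (h : Esp d → ℝ) (x : Esp d) (i : Fin d) : gradient h x i = Pd i h x := by
  have : (inner ℝ (gradient h x) (ee i) : ℝ) = gradient h x i := by
    rw [ee, EuclideanSpace.inner_single_right]; simp
  rw [← this, inner_gradient]; rfl

lemma inner_grad_grad (a b : Esp d → ℝ) (x : Esp d) :
    (inner ℝ (gradient a x) (gradient b x) : ℝ) = ∑ i, Pd i a x * Pd i b x := by
  rw [real_inner_comm, inner_gradient, fderiv_apply_eq_sum]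
  exact Finset.sum_congr rfl fun i _ => by rw [grad_coord]

lemma norm_grad_sq (h : Esp d → ℝ) (x : Esp d) :
    ‖gradient h x‖^2 = ∑ i, (Pd i h x)^2 := by
  rw [← real_inner_self_eq_norm_sq, inner_grad_grad]
  exact Finset.sum_congr rfl fun i _ => (sq _).symm

lemma Lop_eq (V : Esp d → Esp d) (h : Esp d → ℝ) (x : Esp d) :
    Lop V h x = lap h x + fderiv ℝ h x (V x) := by
  rw [Lop, real_inner_comm, inner_gradient]

variable {a b h : Esp d → ℝ} {x : Esp d} {i : Fin d}

lemma h1le : (∞ : WithTop ℕ∞) ≠ 0 := by simp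

lemma contDiff_Pd (hh : ContDiff ℝ ∞ h) (i : Fin d) : ContDiff ℝ ∞ (Pd i h) :=
  (hh.fderiv_right (le_refl _)).clm_apply contDiff_const

lemma Pd_mul (ha : DifferentiableAt ℝ a x) (hb : DifferentiableAt ℝ b x) :
    Pd i (fun y => a y * b y) x = a x * Pd i b x + b x * Pd i a x := by
  simp [Pd, fderiv_fun_mul ha hb]

lemma Pd_comp_pt {φ : ℝ → ℝ} {D : ℝ} (hφ : HasDerivAt φ D (a x))
    (ha : DifferentiableAt ℝ a x) :
    Pd i (fun y => φ (a y)) x = D * Pd i a x := by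
  have h2 := (hφ.comp_hasFDerivAt x ha.hasFDerivAt)
  have h3 : fderiv ℝ (fun y => φ (a y)) x = D • fderiv ℝ a x := h2.fderiv
  rw [Pd, h3]; simp [Pd, smul_eq_mul]

lemma Pd_affine (c c' : ℝ) (hh : DifferentiableAt ℝ h x) :
    Pd i (fun y => c * h y + c') x = c * Pd i h x := by
  have := Pd_comp_pt (a := h) (φ := fun s => c * s + c') (i := i)
    (((hasDerivAt_id (h x)).const_mul c).add_const c') hh
  simpa using this

lemma lap_mul (ha : ContDiff ℝ ∞ a) (hb : ContDiff ℝ ∞ b) (x : Esp d) :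
    lap (fun y => a y * b y) x
      = a x * lap b x + b x * lap a x + 2 * ∑ i, Pd i a x * Pd i b x := by
  rw [lap_eq, lap_eq, lap_eq]
  have key : ∀ i, Pd i (Pd i (fun y => a y * b y)) x
      = a x * Pd i (Pd i b) x + b x * Pd i (Pd i a) x + 2 * (Pd i a x * Pd i b x) := by
    intro i
    have h1 : Pd i (fun y => a y * b y) = fun y => a y * Pd i b y + b y * Pd i a y :=
      funext fun y => Pd_mul (ha.differentiable h1le y) (hb.differentiable h1le y)
    rw [h1]
    have da := ha.differentiable h1le x
    have db := hb.differentiable h1le x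
    have dpa := (contDiff_Pd ha i).differentiable h1le x
    have dpb := (contDiff_Pd hb i).differentiable h1le x
    have e1 : Pd i (fun y => a y * Pd i b y + b y * Pd i a y) x
        = Pd i (fun y => a y * Pd i b y) x + Pd i (fun y => b y * Pd i a y) x := by
      rw [Pd, fderiv_fun_add (f := fun y => a y * Pd i b y) (g := fun y => b y * Pd i a y) (da.mul dpb) (db.mul dpa)]; rfl
    rw [e1, Pd_mul da dpb, Pd_mul db dpa]; ring
  rw [Finset.sum_congr rfl fun i _ => key i]
  rw [Finset.sum_add_distrib, Finset.sum_add_distrib, ← Finset.mul_sum, ← Finset.mul_sum,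
    ← Finset.mul_sum]

lemma lap_comp {φ φd φdd : ℝ → ℝ} (ha : ContDiff ℝ ∞ a)
    (hφ : ∀ y, HasDerivAt φ (φd (a y)) (a y))
    (hφd : ∀ y, HasDerivAt φd (φdd (a y)) (a y)) (x : Esp d) :
    lap (fun y => φ (a y)) x
      = φd (a x) * lap a x + φdd (a x) * ∑ i, (Pd i a x)^2 := by
  rw [lap_eq, lap_eq]
  have key : ∀ i, Pd i (Pd i (fun y => φ (a y))) x
      = φd (a x) * Pd i (Pd i a) x + φdd (a x) * (Pd i a x)^2 := by
    intro i
    have h1 : Pd i (fun y => φ (a y)) = fun y => φd (a y) * Pd i a y :=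
      funext fun y => Pd_comp_pt (hφ y) (ha.differentiable h1le y)
    rw [h1]
    have da := ha.differentiable h1le x
    have dpa := (contDiff_Pd ha i).differentiable h1le x
    have dφd : DifferentiableAt ℝ (fun y => φd (a y)) x :=
      ((hφd x).differentiableAt).comp x da
    rw [Pd_mul dφd dpa, Pd_comp_pt (hφd x) da]; ring
  rw [Finset.sum_congr rfl fun i _ => key i]
  rw [Finset.sum_add_distrib, ← Finset.mul_sum, ← Finset.mul_sum]

lemma lap_affine (c c' : ℝ) (hh : ContDiff ℝ ∞ h) (x : Esp d) :
    lap (fun y => c * h y + c') x = c * lap h x := by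
  have := lap_comp (φ := fun s => c * s + c') (φd := fun _ => c) (φdd := fun _ => 0) hh
    (fun y => by simpa using ((hasDerivAt_id (h y)).const_mul c).add_const c')
    (fun y => hasDerivAt_const _ _) x
  simpa using this


lemma hasDerivAt_time {F : ℝ → Esp d → ℝ} {t : ℝ} {x : Esp d}
    (hF : DifferentiableAt ℝ (fun p : ℝ × Esp d => F p.1 p.2) (t, x)) :
    HasDerivAt (fun s => F s x)
      (fderiv ℝ (fun p : ℝ × Esp d => F p.1 p.2) (t, x) (1, 0)) t := by
  have h := hF.hasFDerivAt.comp_hasDerivAt t ((hasDerivAt_id t).prodMk (hasDerivAt_const t x))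
  exact h

lemma fderiv_space {F : ℝ → Esp d → ℝ} {t : ℝ} {x : Esp d}
    (hF : DifferentiableAt ℝ (fun p : ℝ × Esp d => F p.1 p.2) (t, x)) (w : Esp d) :
    fderiv ℝ (F t) x w = fderiv ℝ (fun p : ℝ × Esp d => F p.1 p.2) (t, x) (0, w) := by
  have h := hF.hasFDerivAt.comp x ((hasFDerivAt_const t x).prodMk (hasFDerivAt_id x))
  have h2 : fderiv ℝ (fun y => F t y) x = _ := h.fderiv
  rw [h2]; simp

lemma contDiff_space {F : ℝ → Esp d → ℝ} {t : ℝ}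
    (hF : ∀ y, ContDiffAt ℝ ∞ (fun p : ℝ × Esp d => F p.1 p.2) (t, y)) :
    ContDiff ℝ ∞ (F t) :=
  contDiff_iff_contDiffAt.2 fun y => (hF y).comp y (contDiffAt_const.prodMk contDiffAt_id)

lemma mix {F : ℝ → Esp d → ℝ}
    (hF : ∀ s, 0 < s → ∀ y, ContDiffAt ℝ ∞ (fun p : ℝ × Esp d => F p.1 p.2) (s, y))
    {t : ℝ} (ht : 0 < t) (x : Esp d) (w : Esp d) :
    HasDerivAt (fun s => fderiv ℝ (F s) x w)
      (fderiv ℝ (fun y => deriv (fun r => F r y) t) x w) t := by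
  set Fj := fun p : ℝ × Esp d => F p.1 p.2 with hFjdef
  set D := fderiv ℝ Fj with hDdef
  have hDsm : ∀ s, 0 < s → ∀ y, ContDiffAt ℝ ∞ D (s, y) := fun s hs y =>
    (hF s hs y).fderiv_right (le_refl _)
  have hDdiff : DifferentiableAt ℝ D (t, x) := (hDsm t ht x).differentiableAt h1le
  set B := fderiv ℝ D (t, x) with hBdef
  have hsymm : ∀ v w' : ℝ × Esp d, B v w' = B w' v := by
    intro v w'
    refine second_derivative_symmetric_of_eventually (f := Fj) ?_ hDdiff.hasFDerivAt v w'
    filter_upwards [IsOpen.mem_nhds (isOpen_Ioi.prod isOpen_univ)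
      (⟨ht, mem_univ x⟩ : (t, x) ∈ Ioi (0:ℝ) ×ˢ univ)] with p hp
    obtain ⟨p1, p2⟩ := p
    exact ((hF p1 hp.1 p2).differentiableAt h1le).hasFDerivAt
  have h1 : HasDerivAt (fun s => D (s, x)) (B (1, 0)) t :=
    hDdiff.hasFDerivAt.comp_hasDerivAt t ((hasDerivAt_id t).prodMk (hasDerivAt_const t x))
  have h2 : HasDerivAt (fun s => D (s, x) ((0:ℝ), w)) (B (1, 0) ((0:ℝ), w)) t := by
    have h := h1.clm_apply (hasDerivAt_const t ((0:ℝ), w))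
    simpa using h
  have hev : (fun s => fderiv ℝ (F s) x w) =ᶠ[𝓝 t] fun s => D (s, x) ((0:ℝ), w) := by
    filter_upwards [Ioi_mem_nhds ht] with s hs
    exact fderiv_space ((hF s hs x).differentiableAt h1le) w
  have hfun : (fun y => deriv (fun r => F r y) t) = fun y => D (t, y) ((1:ℝ), (0:Esp d)) := by
    funext y
    exact (hasDerivAt_time ((hF t ht y).differentiableAt h1le)).deriv
  have h3 : HasFDerivAt (fun y => D (t, y))
      (B.comp ((0 : Esp d →L[ℝ] ℝ).prod (ContinuousLinearMap.id ℝ (Esp d)))) x :=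
    hDdiff.hasFDerivAt.comp x ((hasFDerivAt_const t x).prodMk (hasFDerivAt_id x))
  have h4 := h3.clm_apply (hasFDerivAt_const ((1:ℝ), (0:Esp d)) x)
  have hRHS : fderiv ℝ (fun y => deriv (fun r => F r y) t) x w = B ((0:ℝ), w) ((1:ℝ), (0:Esp d)) := by
    rw [hfun, h4.fderiv]; simp
  rw [hRHS, ← hsymm]
  exact h2.congr_of_eventuallyEq hev

lemma mix_lap {F : ℝ → Esp d → ℝ}
    (hF : ∀ s, 0 < s → ∀ y, ContDiffAt ℝ ∞ (fun p : ℝ × Esp d => F p.1 p.2) (s, y))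
    {t : ℝ} (ht : 0 < t) (x : Esp d) :
    HasDerivAt (fun s => lap (F s) x)
      (lap (fun y => deriv (fun r => F r y) t) x) t := by
  have key : ∀ i : Fin d, HasDerivAt (fun s => Pd i (Pd i (F s)) x)
      (Pd i (Pd i (fun y => deriv (fun r => F r y) t)) x) t := by
    intro i
    have hF'j : ∀ s, 0 < s → ∀ y,
        ContDiffAt ℝ ∞ (fun p : ℝ × Esp d => Pd i (F p.1) p.2) (s, y) := by
      intro s hs y
      have base : ContDiffAt ℝ ∞
          (fun p : ℝ × Esp d => fderiv ℝ (fun q : ℝ × Esp d => F q.1 q.2) p ((0:ℝ), ee i)) (s, y) :=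
        ((hF s hs y).fderiv_right (le_refl _)).clm_apply contDiffAt_const
      apply base.congr_of_eventuallyEq
      filter_upwards [IsOpen.mem_nhds (isOpen_Ioi.prod isOpen_univ)
        (⟨hs, mem_univ y⟩ : (s, y) ∈ Ioi (0:ℝ) ×ˢ univ)] with p hp
      obtain ⟨p1, p2⟩ := p
      exact fderiv_space ((hF p1 hp.1 p2).differentiableAt h1le) (ee i)
    have h := mix (F := fun s => Pd i (F s)) hF'j ht x (ee i)
    have hfun : (fun y => deriv (fun r => Pd i (F r) y) t)
        = Pd i (fun y => deriv (fun r => F r y) t) := by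
      funext y
      exact (mix hF ht y (ee i)).deriv
    rw [hfun] at h
    exact h
  have hsum := HasDerivAt.fun_sum (fun i (_ : i ∈ Finset.univ) => key i)
  simpa [lap_eq] using hsum


-- new material
lemma Pd_rpow (ha : DifferentiableAt ℝ a x) (hpos : a x ≠ 0) (q : ℝ) :
    Pd i (fun y => a y ^ q) x = q * a x ^ (q-1) * Pd i a x :=
  Pd_comp_pt (Real.hasDerivAt_rpow_const (Or.inl hpos)) ha

lemma fderiv_rpow_apply (ha : DifferentiableAt ℝ a x) (hpos : a x ≠ 0) (q : ℝ) (v : Esp d) :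
    fderiv ℝ (fun y => a y ^ q) x v = q * a x ^ (q-1) * fderiv ℝ a x v := by
  have h2 := ((Real.hasDerivAt_rpow_const (p := q) (Or.inl hpos)).comp_hasFDerivAt x ha.hasFDerivAt)
  have h3 : fderiv ℝ (fun y => a y ^ q) x = (q * a x ^ (q-1)) • fderiv ℝ a x := h2.fderiv
  rw [h3]; simp [smul_eq_mul]

lemma lap_rpow (ha : ContDiff ℝ ∞ a) (hpos : ∀ y, 0 < a y) (q : ℝ) (x : Esp d) :
    lap (fun y => a y ^ q) x
      = q * a x ^ (q-1) * lap a x + q * (q-1) * a x ^ (q-2) * ∑ i, (Pd i a x)^2 := by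
  have h := lap_comp (φ := fun s => s ^ q) (φd := fun s => q * s ^ (q-1))
    (φdd := fun s => q * (q-1) * s ^ (q-2)) ha
    (fun y => Real.hasDerivAt_rpow_const (Or.inl (hpos y).ne'))
    (fun y => by
      simpa [show q-1-1 = q-2 by ring, mul_assoc] using
        (Real.hasDerivAt_rpow_const (p := q-1) (Or.inl (hpos y).ne')).const_mul q) x
  rw [h]

lemma lap_inv (hb : ContDiff ℝ ∞ b) (hne : ∀ y, b y ≠ 0) (x : Esp d) :
    lap (fun y => (b y)⁻¹) x
      = -((b x)^2)⁻¹ * lap b x + (2 * b x / ((b x)^2)^2) * ∑ i, (Pd i b x)^2 := by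
  have h := lap_comp (φ := fun s => s⁻¹) (φd := fun s => -((s^2)⁻¹))
    (φdd := fun s => 2 * s / ((s^2)^2)) hb
    (fun y => hasDerivAt_inv (hne y))
    (fun y => by
      have h := ((hasDerivAt_pow 2 (b y)).inv (pow_ne_zero 2 (hne y))).neg
      refine h.congr_deriv ?_
      norm_num
      ring) x
  rw [h]


end EvoY

/-- Evolution equation for `Y = (∂_t f)/U`: `(A − ∂_t)Y = −(m−1)Y²`. -/
theorem evolution_equation_Y
    {d : ℕ} (hd : 1 ≤ d) (V : Esp d → Esp d) (hV : ContDiff ℝ (⊤ : ℕ∞) V)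
    (m : ℝ) (hm0 : 0 < m) (hm1 : m ≠ 1)
    (u : ℝ → Esp d → ℝ)
    (hu_smooth : ContDiffOn ℝ (⊤ : ℕ∞) (fun p : ℝ × Esp d => u p.1 p.2) (Set.Ioi 0 ×ˢ Set.univ))
    (hu_pos : ∀ t, 0 < t → ∀ x, 0 < u t x)
    (hu_pde : ∀ t, 0 < t → ∀ x,
      deriv (fun s => u s x) t = Lop V (fun y => u t y ^ m) x)
    (f U X Y : ℝ → Esp d → ℝ)
    (hf : ∀ t x, f t x = m * (u t x ^ (m-1) - 1) / (m-1))
    (hU : ∀ t x, U t x = (m-1) * f t x + m)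
    (hX : ∀ t x, X t x = ‖gradient (f t) x‖^2 / U t x)
    (hY : ∀ t x, Y t x = deriv (fun s => f s x) t / U t x)
    :
    ∀ t, 0 < t → ∀ x : Esp d,
      Aop V m (U t) (f t) (Y t) x - deriv (fun s => Y s x) t
        = -(m-1) * (Y t x)^2 := by
  intro t ht x
  have hm1' : m - 1 ≠ 0 := sub_ne_zero.2 hm1
  -- joint smoothness of u at interior points
  have huj : ∀ s, 0 < s → ∀ y, ContDiffAt ℝ ∞ (fun p : ℝ × Esp d => u p.1 p.2) (s, y) := by
    intro s hs y
    exact (hu_smooth.contDiffAt (IsOpen.mem_nhds (isOpen_Ioi.prod isOpen_univ)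
      (⟨hs, mem_univ y⟩ : (s, y) ∈ Ioi (0:ℝ) ×ˢ univ))).of_le (by simp)
  -- joint smoothness of f
  have hfj : ∀ s, 0 < s → ∀ y, ContDiffAt ℝ ∞ (fun p : ℝ × Esp d => f p.1 p.2) (s, y) := by
    intro s hs y
    have h1 : ContDiffAt ℝ ∞ (fun p : ℝ × Esp d => m * (u p.1 p.2 ^ (m-1) - 1) / (m-1)) (s, y) :=
      ((contDiffAt_const.mul (((huj s hs y).rpow_const_of_ne
        (hu_pos s hs y).ne').sub contDiffAt_const))).div_const (m-1)
    exact h1.congr_of_eventuallyEq (Eventually.of_forall fun p => hf p.1 p.2)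
  -- joint smoothness of the time derivative of f
  have hgj : ∀ s, 0 < s → ∀ y, ContDiffAt ℝ ∞
      (fun p : ℝ × Esp d => deriv (fun r => f r p.2) p.1) (s, y) := by
    intro s hs y
    have base : ContDiffAt ℝ ∞
        (fun p : ℝ × Esp d => fderiv ℝ (fun q : ℝ × Esp d => f q.1 q.2) p ((1:ℝ), (0:Esp d))) (s, y) :=
      ((hfj s hs y).fderiv_right (le_refl _)).clm_apply contDiffAt_const
    apply base.congr_of_eventuallyEq
    filter_upwards [IsOpen.mem_nhds (isOpen_Ioi.prod isOpen_univ)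
      (⟨hs, mem_univ y⟩ : (s, y) ∈ Ioi (0:ℝ) ×ˢ univ)] with p hp
    obtain ⟨p1, p2⟩ := p
    exact (EvoY.hasDerivAt_time ((hfj p1 hp.1 p2).differentiableAt EvoY.h1le)).deriv
  -- spatial smoothness at time t
  have hft : ContDiff ℝ ∞ (f t) := EvoY.contDiff_space (fun y => hfj t ht y)
  have hgt : ContDiff ℝ ∞ (fun y => deriv (fun r => f r y) t) :=
    EvoY.contDiff_space (F := fun s y => deriv (fun r => f r y) s) (fun y => hgj t ht y)
  -- U basics
  have hUeq : ∀ s y, U s y = m * u s y ^ (m-1) := by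
    intro s y; rw [hU, hf]; field_simp; ring
  have hUpos : ∀ s, 0 < s → ∀ y, 0 < U s y := fun s hs y => by
    rw [hUeq]; exact mul_pos hm0 (Real.rpow_pos_of_pos (hu_pos s hs y) _)
  have hUt : U t = fun y => (m-1) * f t y + m := funext fun y => hU t y
  have hUtS : ContDiff ℝ ∞ (U t) := by
    rw [hUt]; exact (contDiff_const.mul hft).add contDiff_const
  have hUne : ∀ y, U t y ≠ 0 := fun y => (hUpos t ht y).ne'
  -- the pressure equation E1
  have hE1 : ∀ s, 0 < s → ∀ y, deriv (fun r => f r y) s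
      = U s y * (lap (f s) y + fderiv ℝ (f s) y (V y)) + ∑ i, (EvoY.Pd i (f s) y)^2 := by
    intro s hs y
    have ha : ContDiff ℝ ∞ (u s) := EvoY.contDiff_space (fun z => huj s hs z)
    have hap : ∀ z, 0 < u s z := hu_pos s hs
    have hane : ∀ z, u s z ≠ 0 := fun z => (hap z).ne'
    have hud : HasDerivAt (fun r => u r y) (deriv (fun r => u r y) s) s :=
      (EvoY.hasDerivAt_time ((huj s hs y).differentiableAt EvoY.h1le)).differentiableAt.hasDerivAt
    have hfd : HasDerivAt (fun r => f r y)
        (m * u s y ^ (m-2) * deriv (fun r => u r y) s) s := by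
      have h1 := hud.rpow_const (p := m-1) (Or.inl (hane y))
      have h2 := ((h1.sub_const 1).const_mul m).div_const (m-1)
      have h3 : (fun r => f r y) = fun r => m * (u r y ^ (m-1) - 1) / (m-1) :=
        funext fun r => hf r y
      rw [h3]
      refine h2.congr_deriv ?_
      rw [show m - 2 = m - 1 - 1 by ring]
      field_simp
    have hgsy : deriv (fun r => f r y) s = m * u s y ^ (m-2) * deriv (fun r => u r y) s :=
      hfd.deriv
    have hpde := hu_pde s hs y
    rw [EvoY.Lop_eq] at hpde
    rw [EvoY.lap_rpow ha hap m y,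
      EvoY.fderiv_rpow_apply (ha.differentiable EvoY.h1le y) (hane y) m (V y)] at hpde
    have hfseq : f s = fun z => (m/(m-1)) * u s z ^ (m-1) + (-(m/(m-1))) := by
      funext z; rw [hf]; field_simp; ring
    have haq : ContDiff ℝ ∞ (fun z => u s z ^ (m-1)) :=
      contDiff_iff_contDiffAt.2 fun z => (ha.contDiffAt).rpow_const_of_ne (hane z)
    have hlapf : lap (f s) y = (m/(m-1)) * ((m-1) * u s y ^ (m-2) * lap (u s) y
        + (m-1)*(m-2) * u s y ^ (m-3) * ∑ i, (EvoY.Pd i (u s) y)^2) := by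
      rw [hfseq, EvoY.lap_affine _ _ haq y, EvoY.lap_rpow ha hap (m-1) y,
        show m-1-1 = m-2 by ring, show m-1-2 = m-3 by ring]
    have hPdf : ∀ i z, EvoY.Pd i (f s) z = m * u s z ^ (m-2) * EvoY.Pd i (u s) z := by
      intro i z
      rw [hfseq, EvoY.Pd_affine _ _ (haq.differentiable EvoY.h1le z),
        EvoY.Pd_rpow (ha.differentiable EvoY.h1le z) (hane z) (m-1),
        show m-1-1 = m-2 by ring]
      field_simp
    have hfdVf : fderiv ℝ (f s) y (V y) = m * u s y ^ (m-2) * fderiv ℝ (u s) y (V y) := by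
      rw [EvoY.fderiv_apply_eq_sum, EvoY.fderiv_apply_eq_sum (u s), Finset.mul_sum]
      refine Finset.sum_congr rfl fun i _ => ?_
      rw [hPdf i y]; ring
    have hSq : ∑ i, (EvoY.Pd i (f s) y)^2
        = (m * u s y ^ (m-2))^2 * ∑ i, (EvoY.Pd i (u s) y)^2 := by
      rw [Finset.mul_sum]
      refine Finset.sum_congr rfl fun i _ => ?_
      rw [hPdf i y]; ring
    rw [hgsy, hpde, hUeq s y, hlapf, hfdVf, hSq]
    have h1 : u s y ^ (m-1) = u s y ^ (m-2) * u s y := by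
      rw [show m-1 = (m-2)+1 by ring, Real.rpow_add_one (hane y)]
    have h2 : u s y ^ (m-2) = u s y ^ (m-3) * u s y := by
      rw [show m-2 = (m-3)+1 by ring, Real.rpow_add_one (hane y)]
    rw [h1, h2]
    field_simp
    ring
  -- time derivatives at (t, x)
  have hfdT : HasDerivAt (fun s => f s x) (deriv (fun r => f r x) t) t :=
    (EvoY.hasDerivAt_time ((hfj t ht x).differentiableAt EvoY.h1le)).differentiableAt.hasDerivAt
  have hUd : HasDerivAt (fun s => U s x) ((m-1) * deriv (fun r => f r x) t) t := by
    have h2 := (hfdT.const_mul (m-1)).add_const m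
    exact h2.congr_of_eventuallyEq (Eventually.of_forall fun s => hU s x)
  have hLapd : HasDerivAt (fun s => lap (f s) x)
      (lap (fun y => deriv (fun r => f r y) t) x) t := EvoY.mix_lap hfj ht x
  have hPdd : ∀ w : Esp d, HasDerivAt (fun s => fderiv ℝ (f s) x w)
      (fderiv ℝ (fun y => deriv (fun r => f r y) t) x w) t := fun w => EvoY.mix hfj ht x w
  have hSqd : HasDerivAt (fun s => ∑ i, (EvoY.Pd i (f s) x)^2)
      (∑ i, 2 * (EvoY.Pd i (f t) x * EvoY.Pd i (fun y => deriv (fun r => f r y) t) x)) t := by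
    apply HasDerivAt.fun_sum
    intro i _
    have h : HasDerivAt (fun s => EvoY.Pd i (f s) x)
        (EvoY.Pd i (fun y => deriv (fun r => f r y) t) x) t := hPdd (EvoY.ee i)
    have h3 : HasDerivAt (fun s => EvoY.Pd i (f s) x * EvoY.Pd i (f s) x)
        (2 * (EvoY.Pd i (f t) x * EvoY.Pd i (fun y => deriv (fun r => f r y) t) x)) t := by
      have h2 := h.mul h
      refine h2.congr_deriv ?_; ring
    simpa [pow_two] using h3
  set G' : ℝ := (m-1) * deriv (fun r => f r x) t * (lap (f t) x + fderiv ℝ (f t) x (V x))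
      + U t x * (lap (fun y => deriv (fun r => f r y) t) x
        + fderiv ℝ (fun y => deriv (fun r => f r y) t) x (V x))
      + ∑ i, 2 * (EvoY.Pd i (f t) x * EvoY.Pd i (fun y => deriv (fun r => f r y) t) x)
    with hG'def
  have hgd : HasDerivAt (fun s => deriv (fun r => f r x) s) G' t := by
    have hR := (hUd.mul (hLapd.add (hPdd (V x)))).add hSqd
    have hR2 : HasDerivAt (fun s => U s x * (lap (f s) x + fderiv ℝ (f s) x (V x))
        + ∑ i, (EvoY.Pd i (f s) x)^2) G' t := by
      exact hR.congr_deriv (by rw [hG'def]; simp only [Pi.add_apply])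
    refine hR2.congr_of_eventuallyEq ?_
    filter_upwards [Ioi_mem_nhds ht] with s hs
    exact hE1 s hs x
  have hYfun : (fun s => Y s x) = fun s => deriv (fun r => f r x) s / U s x :=
    funext fun s => hY s x
  have hYd : HasDerivAt (fun s => Y s x)
      ((G' * U t x - deriv (fun r => f r x) t * ((m-1) * deriv (fun r => f r x) t))
        / (U t x)^2) t := by
    rw [hYfun]
    exact hgd.div hUd (hUne x)
  -- spatial expansion of Y t
  have hIv : ContDiff ℝ ∞ (fun y => (U t y)⁻¹) := hUtS.inv hUne
  have hYt : Y t = fun y => deriv (fun r => f r y) t * (U t y)⁻¹ := by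
    funext y; rw [hY, div_eq_mul_inv]
  have hPdU : ∀ i, EvoY.Pd i (U t) x = (m-1) * EvoY.Pd i (f t) x := by
    intro i; rw [hUt]; exact EvoY.Pd_affine _ _ (hft.differentiable EvoY.h1le x)
  have hPdIv : ∀ i, EvoY.Pd i (fun y => (U t y)⁻¹) x
      = (-(m-1) * ((U t x)^2)⁻¹) * EvoY.Pd i (f t) x := by
    intro i
    rw [EvoY.Pd_comp_pt (hasDerivAt_inv (hUne x)) (hUtS.differentiable EvoY.h1le x), hPdU i]
    ring
  have hPdY : ∀ i, EvoY.Pd i (Y t) x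
      = (-(m-1) * deriv (fun r => f r x) t * ((U t x)^2)⁻¹) * EvoY.Pd i (f t) x
        + (U t x)⁻¹ * EvoY.Pd i (fun y => deriv (fun r => f r y) t) x := by
    intro i
    rw [hYt, EvoY.Pd_mul (hgt.differentiable EvoY.h1le x) (hIv.differentiable EvoY.h1le x),
      hPdIv i]
    ring
  have hlapIv : lap (fun y => (U t y)⁻¹) x
      = -((U t x)^2)⁻¹ * ((m-1) * lap (f t) x)
        + (2 * U t x / ((U t x)^2)^2) * ((m-1)^2 * ∑ i, (EvoY.Pd i (f t) x)^2) := by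
    rw [EvoY.lap_inv hUtS hUne x]
    have hlapU : lap (U t) x = (m-1) * lap (f t) x := by
      rw [hUt]; exact EvoY.lap_affine _ _ hft x
    have hsq : ∑ i, (EvoY.Pd i (U t) x)^2 = (m-1)^2 * ∑ i, (EvoY.Pd i (f t) x)^2 := by
      rw [Finset.mul_sum]
      exact Finset.sum_congr rfl fun i _ => by rw [hPdU i]; ring
    rw [hlapU, hsq]
  have hcross : ∑ i, EvoY.Pd i (fun y => deriv (fun r => f r y) t) x
        * EvoY.Pd i (fun y => (U t y)⁻¹) x
      = (-(m-1) * ((U t x)^2)⁻¹)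
        * ∑ i, EvoY.Pd i (f t) x * EvoY.Pd i (fun y => deriv (fun r => f r y) t) x := by
    rw [Finset.mul_sum]
    exact Finset.sum_congr rfl fun i _ => by rw [hPdIv i]; ring
  have hA1 : lap (Y t) x
      = deriv (fun r => f r x) t * (-((U t x)^2)⁻¹ * ((m-1) * lap (f t) x)
          + (2 * U t x / ((U t x)^2)^2) * ((m-1)^2 * ∑ i, (EvoY.Pd i (f t) x)^2))
        + (U t x)⁻¹ * lap (fun y => deriv (fun r => f r y) t) x
        + 2 * ((-(m-1) * ((U t x)^2)⁻¹)
          * ∑ i, EvoY.Pd i (f t) x * EvoY.Pd i (fun y => deriv (fun r => f r y) t) x) := by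
    rw [hYt, EvoY.lap_mul hgt hIv x, hlapIv, hcross]
  have hA2 : fderiv ℝ (Y t) x (V x)
      = (-(m-1) * deriv (fun r => f r x) t * ((U t x)^2)⁻¹)
          * ∑ i, V x i * EvoY.Pd i (f t) x
        + (U t x)⁻¹ * ∑ i, V x i * EvoY.Pd i (fun y => deriv (fun r => f r y) t) x := by
    rw [EvoY.fderiv_apply_eq_sum]
    have hterm : ∀ i : Fin d, V x i * EvoY.Pd i (Y t) x
        = (-(m-1) * deriv (fun r => f r x) t * ((U t x)^2)⁻¹) * (V x i * EvoY.Pd i (f t) x)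
          + (U t x)⁻¹ * (V x i * EvoY.Pd i (fun y => deriv (fun r => f r y) t) x) :=
      fun i => by rw [hPdY i]; ring
    rw [Finset.sum_congr rfl fun i _ => hterm i, Finset.sum_add_distrib,
      ← Finset.mul_sum, ← Finset.mul_sum]
  have hA3 : ∑ i, EvoY.Pd i (f t) x * EvoY.Pd i (Y t) x
      = (-(m-1) * deriv (fun r => f r x) t * ((U t x)^2)⁻¹)
          * ∑ i, (EvoY.Pd i (f t) x)^2
        + (U t x)⁻¹
          * ∑ i, EvoY.Pd i (f t) x * EvoY.Pd i (fun y => deriv (fun r => f r y) t) x := by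
    have hterm : ∀ i : Fin d, EvoY.Pd i (f t) x * EvoY.Pd i (Y t) x
        = (-(m-1) * deriv (fun r => f r x) t * ((U t x)^2)⁻¹) * (EvoY.Pd i (f t) x)^2
          + (U t x)⁻¹
            * (EvoY.Pd i (f t) x * EvoY.Pd i (fun y => deriv (fun r => f r y) t) x) :=
      fun i => by rw [hPdY i]; ring
    rw [Finset.sum_congr rfl fun i _ => hterm i, Finset.sum_add_distrib,
      ← Finset.mul_sum, ← Finset.mul_sum]
  -- final assembly
  have hE1x := hE1 t ht x
  have h2S : (∑ i, 2 * (EvoY.Pd i (f t) x * EvoY.Pd i (fun y => deriv (fun r => f r y) t) x))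
      = 2 * ∑ i, EvoY.Pd i (f t) x * EvoY.Pd i (fun y => deriv (fun r => f r y) t) x :=
    (Finset.mul_sum _ _ _).symm
  simp only [Aop]
  rw [EvoY.Lop_eq, EvoY.inner_grad_grad, hYd.deriv, hA1, hA2, hA3, hY t x, hG'def, h2S]
  simp only [EvoY.fderiv_apply_eq_sum]
  simp only [EvoY.fderiv_apply_eq_sum] at hE1x
  rw [hE1x]
  have hUx := hUne x
  field_simp
  ring
end
end

section
/- The function U = (m−1)f + m satisfies the evolution equation (A − ∂_t)U = (2m−1)(m−1)·U·X at every point of (0,∞) × ℝ^d. -/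
noncomputable section

open Real Set Filter

lemma sum_fderiv_sq {d : ℕ} (g : Esp d → ℝ) {x : Esp d} :
    ∑ i, (fderiv ℝ g x (EuclideanSpace.single i (1:ℝ)))^2 = ‖gradient g x‖^2 := by
  have key : ∀ i, fderiv ℝ g x (EuclideanSpace.single i (1:ℝ)) = gradient g x i := by
    intro i
    have h1 : (inner ℝ (gradient g x) (EuclideanSpace.single i (1:ℝ)) : ℝ)
        = fderiv ℝ g x (EuclideanSpace.single i (1:ℝ)) := by
      unfold gradient
      exact InnerProductSpace.toDual_symm_apply
    rw [← h1, EuclideanSpace.inner_single_right]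
    simp
  simp_rw [key]
  rw [EuclideanSpace.norm_eq, Real.sq_sqrt (by positivity)]
  congr 1; funext i; rw [Real.norm_eq_abs, sq_abs]

lemma hasFDerivAt_cr {d : ℕ} (g : Esp d → ℝ) {y : Esp d} (hg : DifferentiableAt ℝ g y)
    (hgpos : 0 < g y) (c p b : ℝ) :
    HasFDerivAt (fun y' => c * g y' ^ p + b)
      ((c * (p * g y ^ (p-1))) • fderiv ℝ g y) y := by
  have hφ : HasDerivAt (fun s : ℝ => c * s ^ p + b) (c * (p * g y ^ (p-1))) (g y) :=
    ((Real.hasDerivAt_rpow_const (Or.inl hgpos.ne')).const_mul c).add_const b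
  exact hφ.comp_hasFDerivAt y hg.hasFDerivAt

lemma Lop_cr {d : ℕ} (V : Esp d → Esp d) (g : Esp d → ℝ) (hg : ContDiff ℝ (⊤ : ℕ∞) g)
    (hgpos : ∀ y, 0 < g y) (c p b : ℝ) (x : Esp d) :
    Lop V (fun y => c * g y ^ p + b) x =
      c * p * g x ^ (p-1) * Lop V g x
        + c * p * (p-1) * g x ^ (p-2) * ‖gradient g x‖^2 := by
  have hgd : Differentiable ℝ g := hg.differentiable (by simp)
  have hF1 : ∀ y, HasFDerivAt (fun y' => c * g y' ^ p + b)
      ((c * (p * g y ^ (p-1))) • fderiv ℝ g y) y :=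
    fun y => hasFDerivAt_cr g (hgd y) (hgpos y) c p b
  have hgrad : gradient (fun y => c * g y ^ p + b) x
      = (c * (p * g x ^ (p-1))) • gradient g x := by
    unfold gradient
    rw [(hF1 x).fderiv, map_smul]
  have hlap : lap (fun y => c * g y ^ p + b) x
      = c * (p * g x ^ (p-1)) * lap g x
        + c * (p * ((p-1) * g x ^ (p-2))) * ∑ i, (fderiv ℝ g x (EuclideanSpace.single i (1:ℝ)))^2 := by
    unfold lap
    rw [Finset.mul_sum, Finset.mul_sum, ← Finset.sum_add_distrib]
    apply Finset.sum_congr rfl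
    intro i _
    have hrw : (fun y => fderiv ℝ (fun y' => c * g y' ^ p + b) y (EuclideanSpace.single i (1:ℝ)))
        = fun y => (c * (p * g y ^ (p-1))) * fderiv ℝ g y (EuclideanSpace.single i (1:ℝ)) := by
      funext y
      rw [(hF1 y).fderiv]
      rfl
    rw [hrw]
    have hC : HasFDerivAt (fun y => c * (p * g y ^ (p-1)))
        ((c * (p * ((p-1) * g x ^ (p-2)))) • fderiv ℝ g x) x := by
      have hφ : HasDerivAt (fun s : ℝ => c * (p * s ^ (p-1)))
          (c * (p * ((p-1) * g x ^ ((p-1)-1)))) (g x) :=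
        (((Real.hasDerivAt_rpow_const (Or.inl (hgpos x).ne')).const_mul p).const_mul c)
      have h2 : (p-1)-1 = p-2 := by ring
      rw [h2] at hφ
      exact hφ.comp_hasFDerivAt x (hgd x).hasFDerivAt
    have hDc : ContDiff ℝ (⊤ : ℕ∞) (fun y => fderiv ℝ g y (EuclideanSpace.single i (1:ℝ))) :=
      (hg.fderiv_right (by simp)).clm_apply contDiff_const
    have hD : HasFDerivAt (fun y => fderiv ℝ g y (EuclideanSpace.single i (1:ℝ)))
        (fderiv ℝ (fun y => fderiv ℝ g y (EuclideanSpace.single i (1:ℝ))) x) x :=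
      (hDc.differentiable (by simp) x).hasFDerivAt
    rw [(show HasFDerivAt (fun y => c * (p * g y ^ (p-1)) * fderiv ℝ g y (EuclideanSpace.single i (1:ℝ))) _ x from hC.mul hD).fderiv]
    simp only [ContinuousLinearMap.add_apply, ContinuousLinearMap.smul_apply, smul_eq_mul]
    ring
  unfold Lop
  rw [hlap, hgrad, real_inner_smul_right, sum_fderiv_sq g]
  ring

lemma grad_cr {d : ℕ} (g : Esp d → ℝ) (hg : Differentiable ℝ g)
    (hgpos : ∀ y, 0 < g y) (c p b : ℝ) (x : Esp d) :
    gradient (fun y => c * g y ^ p + b) x = (c * (p * g x ^ (p-1))) • gradient g x := by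
  unfold gradient
  rw [(hasFDerivAt_cr g (hg x) (hgpos x) c p b).fderiv, map_smul]

/-- Evolution equation for `U = (m−1)f + m`: `(A − ∂_t)U = (2m−1)(m−1)·U·X`. -/
theorem evolution_equation_U
    {d : ℕ} (hd : 1 ≤ d) (V : Esp d → Esp d) (hV : ContDiff ℝ (⊤ : ℕ∞) V)
    (m : ℝ) (hm0 : 0 < m) (hm1 : m ≠ 1)
    (u : ℝ → Esp d → ℝ)
    (hu_smooth : ContDiffOn ℝ (⊤ : ℕ∞) (fun p : ℝ × Esp d => u p.1 p.2) (Set.Ioi 0 ×ˢ Set.univ))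
    (hu_pos : ∀ t, 0 < t → ∀ x, 0 < u t x)
    (hu_pde : ∀ t, 0 < t → ∀ x,
      deriv (fun s => u s x) t = Lop V (fun y => u t y ^ m) x)
    (f U X Y : ℝ → Esp d → ℝ)
    (hf : ∀ t x, f t x = m * (u t x ^ (m-1) - 1) / (m-1))
    (hU : ∀ t x, U t x = (m-1) * f t x + m)
    (hX : ∀ t x, X t x = ‖gradient (f t) x‖^2 / U t x)
    (hY : ∀ t x, Y t x = deriv (fun s => f s x) t / U t x)
    :
    ∀ t, 0 < t → ∀ x : Esp d,
      Aop V m (U t) (f t) (U t) x - deriv (fun s => U s x) t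
        = (2*m-1) * (m-1) * U t x * X t x := by
  intro t ht x
  have hm1' : m - 1 ≠ 0 := sub_ne_zero.mpr hm1
  set g : Esp d → ℝ := fun y => u t y with hgdef
  have hg : ContDiff ℝ (⊤ : ℕ∞) g := by
    rw [← contDiffOn_univ]
    exact hu_smooth.comp ((contDiff_const.prodMk contDiff_id).contDiffOn)
      (fun y _ => ⟨ht, trivial⟩)
  have hgd : Differentiable ℝ g := hg.differentiable (by simp)
  have hgpos : ∀ y, 0 < g y := fun y => hu_pos t ht y
  set a : ℝ := g x with hadef
  have ha : 0 < a := hgpos x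
  set G : ℝ := Lop V g x with hGdef
  set N : ℝ := ‖gradient g x‖^2 with hNdef
  -- function rewrites
  have hUfun : U t = fun y => m * g y ^ (m-1) + 0 := by
    funext y
    rw [hU, hf]
    field_simp
    ring
  have hffun : f t = fun y => (m/(m-1)) * g y ^ (m-1) + (-(m/(m-1))) := by
    funext y
    rw [hf]
    field_simp
    ring
  have humfun : (fun y => u t y ^ m) = fun y => 1 * g y ^ m + 0 := by
    funext y; ring
  -- gradient values
  have hgradU : gradient (U t) x = (m * ((m-1) * a ^ (m-2))) • gradient g x := by
    rw [hUfun]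
    have := grad_cr g hgd hgpos m (m-1) 0 x
    rw [this]
    norm_num [show (m-1)-1 = m-2 from by ring]
    rfl
  have hgradf : gradient (f t) x = ((m/(m-1)) * ((m-1) * a ^ (m-2))) • gradient g x := by
    rw [hffun]
    have := grad_cr g hgd hgpos (m/(m-1)) (m-1) (-(m/(m-1))) x
    rw [this]
    norm_num [show (m-1)-1 = m-2 from by ring]
    rfl
  -- Lop values
  have hLopU : Lop V (U t) x
      = m * (m-1) * a ^ (m-2) * G + m * (m-1) * (m-2) * a ^ (m-3) * N := by
    rw [hUfun, Lop_cr V g hg hgpos m (m-1) 0 x]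
    rw [show (m-1)-1 = m-2 from by ring, show (m-1)-2 = m-3 from by ring]
  have hLopum : Lop V (fun y => u t y ^ m) x
      = m * a ^ (m-1) * G + m * (m-1) * a ^ (m-2) * N := by
    rw [humfun, Lop_cr V g hg hgpos 1 m 0 x]
    ring
  -- time derivative
  have hts : ContDiffOn ℝ (⊤ : ℕ∞) (fun s => u s x) (Ioi 0) :=
    hu_smooth.comp ((contDiff_id.prodMk contDiff_const).contDiffOn)
      (fun s hs => ⟨hs, trivial⟩)
  have hud : DifferentiableAt ℝ (fun s => u s x) t :=
    (hts.contDiffAt (isOpen_Ioi.mem_nhds ht)).differentiableAt (by simp)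
  set u' : ℝ := deriv (fun s => u s x) t with hu'def
  have hu'val : u' = m * a ^ (m-1) * G + m * (m-1) * a ^ (m-2) * N := by
    rw [hu'def, hu_pde t ht x, hLopum]
  have hUtime : (fun s => U s x) = fun s => m * u s x ^ (m-1) := by
    funext s
    rw [hU, hf]
    field_simp
    ring
  have hderivU : deriv (fun s => U s x) t = m * (u' * (m-1) * a ^ (m-2)) := by
    rw [hUtime]
    have hDa : HasDerivAt (fun s => m * u s x ^ (m-1))
        (m * (u' * (m-1) * u t x ^ ((m-1)-1))) t :=
      (hud.hasDerivAt.rpow_const (Or.inl (hu_pos t ht x).ne')).const_mul m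
    rw [hDa.deriv, show (m-1)-1 = m-2 from by ring]
  -- U value and positivity
  have hUval : U t x = m * a ^ (m-1) := by
    rw [hUfun]; norm_num
    exact Or.inl rfl
  have hUpos : 0 < U t x := by
    rw [hUval]; positivity
  -- norms / inner products
  have hinner : (inner ℝ (gradient (f t) x) (gradient (U t) x) : ℝ)
      = ((m/(m-1)) * ((m-1) * a ^ (m-2))) * (m * ((m-1) * a ^ (m-2))) * N := by
    rw [hgradf, hgradU, real_inner_smul_left, real_inner_smul_right,
      real_inner_self_eq_norm_sq]
    ring
  have hnormf : ‖gradient (f t) x‖^2 = ((m/(m-1)) * ((m-1) * a ^ (m-2)))^2 * N := by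
    rw [hgradf, norm_smul, mul_pow, Real.norm_eq_abs, sq_abs]
  -- rpow relations
  have hE2 : a ^ (m-2) = a ^ (m-3) * a := by
    rw [show m-2 = (m-3)+1 from by ring, Real.rpow_add ha, Real.rpow_one]
  have hE1 : a ^ (m-1) = a ^ (m-3) * a * a := by
    rw [show m-1 = (m-3)+1+1 from by ring, Real.rpow_add ha, Real.rpow_add ha, Real.rpow_one]
  -- final computation
  rw [Aop, hX, hnormf, hLopU, hinner, hderivU, hu'val, hUval]
  rw [hE1, hE2]
  have haQ : a ^ (m-3) ≠ 0 := (Real.rpow_pos_of_pos ha _).ne'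
  field_simp
  ring
end
end

section
/- The function Z = X − Y = −Lf satisfies the evolution equation (A − ∂_t)Z = 2Γ₂(f) + (m−1)·Z² at every point of (0,∞) × ℝ^d, where Γ₂(f) is computed in the space variable at each fixed time. -/
noncomputable section

open Real Set Filter Topology

lemma le1top : (1:WithTop ℕ∞) ≤ ((⊤:ℕ∞):WithTop ℕ∞) := by
  rw [show ((1:WithTop ℕ∞)) = (((1:ℕ∞)):WithTop ℕ∞) by rfl]
  exact WithTop.coe_le_coe.mpr le_top
lemma ne0top : ((⊤:ℕ∞):WithTop ℕ∞) ≠ 0 := by simp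
lemma leStop : ((⊤:ℕ∞):WithTop ℕ∞) + 1 ≤ ((⊤:ℕ∞):WithTop ℕ∞) := by
  rw [show ((1:WithTop ℕ∞)) = (((1:ℕ∞)):WithTop ℕ∞) by rfl, ← WithTop.coe_add]
  exact WithTop.coe_le_coe.mpr le_top

variable {d : ℕ}
local notation "S" => ((⊤:ℕ∞) : WithTop ℕ∞)
local notation "e" i => EuclideanSpace.single i (1:ℝ)

/-- smooth everywhere (at level ∞) -/
def Sm {d : ℕ} (h : Esp d → ℝ) : Prop := ∀ y, ContDiffAt ℝ ((⊤:ℕ∞) : WithTop ℕ∞) h y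

lemma inner_grad (h : Esp d → ℝ) (x v : Esp d) :
    (inner ℝ (gradient h x) v : ℝ) = fderiv ℝ h x v := by
  simp [gradient, InnerProductSpace.toDual_symm_apply]

lemma inner_vec_grad (h : Esp d → ℝ) (x : Esp d) (w : Esp d) :
    (inner ℝ w (gradient h x) : ℝ) = fderiv ℝ h x w := by
  rw [real_inner_comm]; exact inner_grad h x w

lemma grad_coord (h : Esp d → ℝ) (x : Esp d) (i : Fin d) :
    gradient h x i = fderiv ℝ h x (e i) := by
  rw [← inner_grad, EuclideanSpace.inner_single_right]
  simp

lemma norm_sq_grad (h : Esp d → ℝ) (x : Esp d) :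
    ‖gradient h x‖^2 = ∑ i, (fderiv ℝ h x (e i))^2 := by
  rw [EuclideanSpace.norm_eq, Real.sq_sqrt (by positivity)]
  exact Finset.sum_congr rfl fun i _ => by rw [grad_coord]; ring_nf; simp [sq_abs]

lemma inner_grads (a b : Esp d → ℝ) (x : Esp d) :
    (inner ℝ (gradient a x) (gradient b x) : ℝ)
      = ∑ i, fderiv ℝ a x (e i) * fderiv ℝ b x (e i) := by
  rw [@PiLp.inner_apply]
  exact Finset.sum_congr rfl fun i _ => by rw [grad_coord, grad_coord]; simp [RCLike.inner_apply]; ring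

namespace Sm

lemma diff {h : Esp d → ℝ} (hh : Sm h) (x : Esp d) : DifferentiableAt ℝ h x :=
  (hh x).differentiableAt ne0top

lemma fderiv_apply {h : Esp d → ℝ} (hh : Sm h) (v : Esp d) :
    Sm (fun y => fderiv ℝ h y v) := fun y =>
  (((hh y).fderiv_right leStop).clm_apply contDiffAt_const)

lemma add {a b : Esp d → ℝ} (ha : Sm a) (hb : Sm b) : Sm (fun y => a y + b y) :=
  fun y => (ha y).add (hb y)

lemma mul {a b : Esp d → ℝ} (ha : Sm a) (hb : Sm b) : Sm (fun y => a y * b y) :=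
  fun y => (ha y).mul (hb y)

lemma const_mul_add {h : Esp d → ℝ} (hh : Sm h) (c c₀ : ℝ) :
    Sm (fun y => c * h y + c₀) :=
  fun y => (((hh y).const_smul c).add contDiffAt_const : ContDiffAt ℝ S (fun y => c • h y + c₀) y)

lemma sum {ι : Type*} {s : Finset ι} {a : ι → Esp d → ℝ} (ha : ∀ i ∈ s, Sm (a i)) :
    Sm (fun y => ∑ i ∈ s, a i y) :=
  fun y => ContDiffAt.sum fun i hi => ha i hi y

lemma lap' {h : Esp d → ℝ} (hh : Sm h) : Sm (lap h) := by
  have : lap h = fun y => ∑ i, fderiv ℝ (fun y' => fderiv ℝ h y' (e i)) y (e i) := rfl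
  rw [this]
  exact Sm.sum fun i _ => (hh.fderiv_apply _).fderiv_apply _

lemma rpow {h : Esp d → ℝ} (hh : Sm h) (hpos : ∀ y, 0 < h y) (r : ℝ) :
    Sm (fun y => h y ^ r) :=
  fun y => (hh y).rpow_const_of_ne (hpos y).ne'

lemma inner_V_grad {h : Esp d → ℝ} (hh : Sm h) {V : Esp d → Esp d}
    (hV : ContDiff ℝ (⊤ : ℕ∞) V) : Sm (fun y => (inner ℝ (V y) (gradient h y) : ℝ)) := by
  have : (fun y => (inner ℝ (V y) (gradient h y) : ℝ)) = fun y => fderiv ℝ h y (V y) :=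
    funext fun y => inner_vec_grad h y (V y)
  rw [this]
  exact fun y => ((hh y).fderiv_right leStop).clm_apply ((hV.contDiffAt).of_le (by simp))

lemma lop {h : Esp d → ℝ} (hh : Sm h) {V : Esp d → Esp d} (hV : ContDiff ℝ (⊤ : ℕ∞) V) :
    Sm (Lop V h) := by
  have : Lop V h = fun y => lap h y + (inner ℝ (V y) (gradient h y) : ℝ) := rfl
  rw [this]
  exact (hh.lap').add (hh.inner_V_grad hV)

end Sm

section rules
variable {V : Esp d → Esp d} (hV : ContDiff ℝ (⊤ : ℕ∞) V)

lemma fderiv_add_fun {a b : Esp d → ℝ} (ha : Sm a) (hb : Sm b) (x : Esp d) (v : Esp d) :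
    fderiv ℝ (fun y => a y + b y) x v = fderiv ℝ a x v + fderiv ℝ b x v := by
  rw [fderiv_fun_add (ha.diff x) (hb.diff x)]; rfl

lemma fderiv_affine {h : Esp d → ℝ} (hh : Sm h) (c c₀ : ℝ) (x : Esp d) (v : Esp d) :
    fderiv ℝ (fun y => c * h y + c₀) x v = c * fderiv ℝ h x v := by
  rw [fderiv_fun_add ((hh.diff x).const_mul c) (differentiableAt_const c₀), fderiv_fun_const]
  rw [fderiv_const_mul (hh.diff x)]
  simp

lemma fderiv_mul_fun {a b : Esp d → ℝ} (ha : Sm a) (hb : Sm b) (x : Esp d) (v : Esp d) :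
    fderiv ℝ (fun y => a y * b y) x v = a x * fderiv ℝ b x v + b x * fderiv ℝ a x v := by
  rw [fderiv_fun_mul (ha.diff x) (hb.diff x)]; simp [mul_comm]

lemma fderiv_rpow {w : Esp d → ℝ} (hw : Sm w) (hpos : ∀ y, 0 < w y) (r : ℝ)
    (x : Esp d) (v : Esp d) :
    fderiv ℝ (fun y => w y ^ r) x v = r * w x ^ (r-1) * fderiv ℝ w x v := by
  have h := ((Real.hasDerivAt_rpow_const (p := r) (Or.inl (hpos x).ne')).comp_hasFDerivAt x
    (hw.diff x).hasFDerivAt).fderiv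
  rw [show (fun y => w y ^ r) = (fun s => s ^ r) ∘ w from rfl, h]; simp [mul_assoc]

lemma lap_add {a b : Esp d → ℝ} (ha : Sm a) (hb : Sm b) (x : Esp d) :
    lap (fun y => a y + b y) x = lap a x + lap b x := by
  unfold lap
  rw [← Finset.sum_add_distrib]
  refine Finset.sum_congr rfl fun i _ => ?_
  have h1 : (fun y => fderiv ℝ (fun y' => a y' + b y') y (e i))
      = fun y => fderiv ℝ a y (e i) + fderiv ℝ b y (e i) :=
    funext fun y => fderiv_add_fun ha hb y _
  rw [h1, fderiv_fun_add ((ha.fderiv_apply _).diff x) ((hb.fderiv_apply _).diff x)]; rfl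

lemma lap_affine {h : Esp d → ℝ} (hh : Sm h) (c c₀ : ℝ) (x : Esp d) :
    lap (fun y => c * h y + c₀) x = c * lap h x := by
  unfold lap
  rw [Finset.mul_sum]
  refine Finset.sum_congr rfl fun i _ => ?_
  have h1 : (fun y => fderiv ℝ (fun y' => c * h y' + c₀) y (e i))
      = fun y => c * fderiv ℝ h y (e i) + 0 :=
    funext fun y => by rw [fderiv_affine hh c c₀ y _]; ring
  rw [h1, fderiv_affine (hh.fderiv_apply _) c 0]

lemma lap_mul {a b : Esp d → ℝ} (ha : Sm a) (hb : Sm b) (x : Esp d) :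
    lap (fun y => a y * b y) x = a x * lap b x + b x * lap a x
      + 2 * ∑ i, fderiv ℝ a x (e i) * fderiv ℝ b x (e i) := by
  unfold lap
  have key : ∀ i : Fin d,
      fderiv ℝ (fun y => fderiv ℝ (fun y' => a y' * b y') y (e i)) x (e i)
        = (a x * fderiv ℝ (fun y => fderiv ℝ b y (e i)) x (e i)
            + fderiv ℝ b x (e i) * fderiv ℝ a x (e i))
          + (b x * fderiv ℝ (fun y => fderiv ℝ a y (e i)) x (e i)
            + fderiv ℝ a x (e i) * fderiv ℝ b x (e i)) := by
    intro i
    have h1 : (fun y => fderiv ℝ (fun y' => a y' * b y') y (e i))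
        = fun y => a y * fderiv ℝ b y (e i) + b y * fderiv ℝ a y (e i) :=
      funext fun y => fderiv_mul_fun ha hb y _
    rw [h1, fderiv_add_fun (ha.mul (hb.fderiv_apply _)) (hb.mul (ha.fderiv_apply _)),
      fderiv_mul_fun ha (hb.fderiv_apply _), fderiv_mul_fun hb (ha.fderiv_apply _)]
  rw [Finset.sum_congr rfl fun i _ => key i]
  rw [Finset.sum_add_distrib, Finset.sum_add_distrib, Finset.sum_add_distrib,
    ← Finset.mul_sum, ← Finset.mul_sum]
  ring_nf
  rw [Finset.sum_congr rfl fun i _ => mul_comm (fderiv ℝ b x (e i)) (fderiv ℝ a x (e i))]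
  ring

lemma lap_rpow {w : Esp d → ℝ} (hw : Sm w) (hpos : ∀ y, 0 < w y) (r : ℝ) (x : Esp d) :
    lap (fun y => w y ^ r) x = r * w x ^ (r-1) * lap w x
      + r * (r-1) * w x ^ (r-2) * ∑ i, (fderiv ℝ w x (e i))^2 := by
  unfold lap
  have key : ∀ i : Fin d,
      fderiv ℝ (fun y => fderiv ℝ (fun y' => w y' ^ r) y (e i)) x (e i)
        = r * w x ^ (r-1) * fderiv ℝ (fun y => fderiv ℝ w y (e i)) x (e i)
          + r * (r-1) * w x ^ (r-2) * (fderiv ℝ w x (e i))^2 := by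
    intro i
    have h1 : (fun y => fderiv ℝ (fun y' => w y' ^ r) y (e i))
        = fun y => (r * w y ^ (r-1)) * fderiv ℝ w y (e i) :=
      funext fun y => fderiv_rpow hw hpos r y _
    have hsm : Sm (fun y => r * w y ^ (r-1)) := by
      have := (hw.rpow hpos (r-1)).const_mul_add r 0
      simpa using this
    rw [h1, fderiv_mul_fun hsm (hw.fderiv_apply _) x _]
    have h2 : fderiv ℝ (fun y => r * w y ^ (r-1)) x (e i)
        = r * ((r-1) * w x ^ (r-1-1) * fderiv ℝ w x (e i)) := by
      have h3 : (fun y => r * w y ^ (r-1)) = fun y => r * (w y ^ (r-1)) + 0 :=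
        funext fun y => by ring
      rw [h3, fderiv_affine (hw.rpow hpos (r-1)) r 0, fderiv_rpow hw hpos (r-1)]
    rw [h2]
    have : r - 1 - 1 = r - 2 := by ring
    rw [this]; ring
  rw [Finset.sum_congr rfl fun i _ => key i, Finset.sum_add_distrib, ← Finset.mul_sum,
    ← Finset.mul_sum]

lemma Lop_add {a b : Esp d → ℝ} (ha : Sm a) (hb : Sm b) (x : Esp d) :
    Lop V (fun y => a y + b y) x = Lop V a x + Lop V b x := by
  unfold Lop
  rw [lap_add ha hb, inner_vec_grad, inner_vec_grad, inner_vec_grad,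
    fderiv_add_fun ha hb]
  ring

lemma Lop_affine {h : Esp d → ℝ} (hh : Sm h) (c c₀ : ℝ) (x : Esp d) :
    Lop V (fun y => c * h y + c₀) x = c * Lop V h x := by
  unfold Lop
  rw [lap_affine hh, inner_vec_grad, inner_vec_grad, fderiv_affine hh]
  ring

lemma Lop_mul {a b : Esp d → ℝ} (ha : Sm a) (hb : Sm b) (x : Esp d) :
    Lop V (fun y => a y * b y) x = a x * Lop V b x + b x * Lop V a x
      + 2 * ∑ i, fderiv ℝ a x (e i) * fderiv ℝ b x (e i) := by
  unfold Lop
  rw [lap_mul ha hb, inner_vec_grad, inner_vec_grad, inner_vec_grad,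
    fderiv_mul_fun ha hb]
  ring

lemma Lop_rpow {w : Esp d → ℝ} (hw : Sm w) (hpos : ∀ y, 0 < w y) (r : ℝ) (x : Esp d) :
    Lop V (fun y => w y ^ r) x = r * w x ^ (r-1) * Lop V w x
      + r * (r-1) * w x ^ (r-2) * ∑ i, (fderiv ℝ w x (e i))^2 := by
  unfold Lop
  rw [lap_rpow hw hpos, inner_vec_grad, inner_vec_grad, fderiv_rpow hw hpos]
  ring

end rules

lemma le2top : (2:WithTop ℕ∞) ≤ ((⊤:ℕ∞):WithTop ℕ∞) := by
  rw [show ((2:WithTop ℕ∞)) = (((2:ℕ∞)):WithTop ℕ∞) by rfl]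
  exact WithTop.coe_le_coe.mpr le_top
lemma fderiv_space (F : ℝ × Esp d → ℝ) {t : ℝ} {x : Esp d}
    (hF : DifferentiableAt ℝ F (t,x)) :
    fderiv ℝ (fun y => F (t,y)) x
      = (fderiv ℝ F (t,x)).comp (ContinuousLinearMap.inr ℝ ℝ (Esp d)) := by
  have : (fun y => F (t,y)) = F ∘ (fun y => ((t:ℝ),y)) := rfl
  rw [this]
  exact (hF.hasFDerivAt.comp x (hasFDerivAt_prodMk_right t x)).fderiv

lemma fderiv_space_apply (F : ℝ × Esp d → ℝ) {t : ℝ} {x : Esp d}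
    (hF : DifferentiableAt ℝ F (t,x)) (v : Esp d) :
    fderiv ℝ (fun y => F (t,y)) x v = fderiv ℝ F (t,x) (0,v) := by
  rw [fderiv_space F hF]; rfl

lemma deriv_time (F : ℝ × Esp d → ℝ) {t : ℝ} {x : Esp d}
    (hF : DifferentiableAt ℝ F (t,x)) :
    deriv (fun s => F (s,x)) t = fderiv ℝ F (t,x) (1,0) := by
  have : (fun s => F (s,x)) = F ∘ (fun s : ℝ => (s,x)) := rfl
  have h := (hF.hasFDerivAt.comp t (hasFDerivAt_prodMk_left (𝕜 := ℝ) t x)).fderiv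
  rw [← fderiv_apply_one_eq_deriv, this, h]; rfl

lemma diff_fderiv_apply (F : ℝ × Esp d → ℝ) {p : ℝ × Esp d}
    (hF : ContDiffAt ℝ S F p) (w : ℝ × Esp d) :
    DifferentiableAt ℝ (fun q => fderiv ℝ F q w) p := by
  have h1 : ContDiffAt ℝ S (fderiv ℝ F) p := by
    apply hF.fderiv_right
    exact leStop
  exact (h1.differentiableAt ne0top).clm_apply (differentiableAt_const w)

lemma fderiv_fderiv_apply (F : ℝ × Esp d → ℝ) {p : ℝ × Esp d}
    (hF : ContDiffAt ℝ S F p) (v w : ℝ × Esp d) :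
    fderiv ℝ (fun q => fderiv ℝ F q w) p v = fderiv ℝ (fderiv ℝ F) p v w := by
  have h1 : ContDiffAt ℝ S (fderiv ℝ F) p := by
    apply hF.fderiv_right
    exact leStop
  rw [fderiv_clm_apply (h1.differentiableAt ne0top) (differentiableAt_const w)]
  simp

lemma schwarz (F : ℝ × Esp d → ℝ)
    (hF : ∀ p : ℝ × Esp d, 0 < p.1 → ContDiffAt ℝ S F p)
    {t : ℝ} (ht : 0 < t) (x : Esp d) (v : Esp d) :
    deriv (fun s => fderiv ℝ (fun y => F (s,y)) x v) t
      = fderiv ℝ (fun y => deriv (fun s => F (s,y)) t) x v := by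
  have hd : ∀ p : ℝ × Esp d, 0 < p.1 → DifferentiableAt ℝ F p := fun p hp =>
    (hF p hp).differentiableAt ne0top
  have h1 : (fun s => fderiv ℝ (fun y => F (s,y)) x v)
      =ᶠ[𝓝 t] fun s => fderiv ℝ F (s,x) (0,v) := by
    filter_upwards [Ioi_mem_nhds ht] with s hs
    exact fderiv_space_apply F (hd (s,x) hs) v
  rw [h1.deriv_eq]
  have h2 : deriv (fun s => fderiv ℝ F (s,x) (0,v)) t
      = fderiv ℝ (fun q => fderiv ℝ F q ((0:ℝ),(v:Esp d))) (t,x) (1,0) :=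
    deriv_time _ (diff_fderiv_apply F (hF (t,x) ht) _)
  rw [h2, fderiv_fderiv_apply F (hF (t,x) ht)]
  have hsymm := ((hF (t,x) ht).isSymmSndFDerivAt (by rw [minSmoothness_of_isRCLikeNormedField]; exact le2top)) (1,0) (0,v)
  rw [hsymm]
  have h3 : (fun y => deriv (fun s => F (s,y)) t)
      = fun y => fderiv ℝ F (t,y) (1,0) :=
    funext fun y => deriv_time F (hd (t,y) ht)
  rw [h3]
  have h4 : (fun y => fderiv ℝ F (t,y) ((1:ℝ),(0:Esp d)))
      = fun y => (fun q => fderiv ℝ F q (1,0)) (t,y) := rfl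
  rw [h4, fderiv_space_apply _ (diff_fderiv_apply F (hF (t,x) ht) _) v,
    fderiv_fderiv_apply F (hF (t,x) ht)]

lemma smoothH (F : ℝ × Esp d → ℝ)
    (hF : ∀ p : ℝ × Esp d, 0 < p.1 → ContDiffAt ℝ S F p) (v : Esp d) :
    ∀ p : ℝ × Esp d, 0 < p.1 →
      ContDiffAt ℝ S (fun q : ℝ × Esp d => fderiv ℝ (fun y => F (q.1, y)) q.2 v) p := by
  intro p hp
  have heq : (fun q : ℝ × Esp d => fderiv ℝ (fun y => F (q.1, y)) q.2 v)
      =ᶠ[𝓝 p] fun q => fderiv ℝ F q (0, v) := by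
    filter_upwards [IsOpen.mem_nhds (isOpen_lt continuous_const continuous_fst) hp] with q hq
    have := fderiv_space_apply F ((hF (q.1, q.2) hq).differentiableAt ne0top) v
    simpa using this
  exact (((hF p hp).fderiv_right leStop).clm_apply contDiffAt_const).congr_of_eventuallyEq heq

lemma schwarz' (F : ℝ × Esp d → ℝ)
    (hF : ∀ p : ℝ × Esp d, 0 < p.1 → ContDiffAt ℝ S F p)
    {t : ℝ} (ht : 0 < t) (x : Esp d) (v : Esp d) :
    HasDerivAt (fun s => fderiv ℝ (fun y => F (s,y)) x v)
      (fderiv ℝ (fun y => deriv (fun s => F (s,y)) t) x v) t := by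
  have h1 : (fun s => fderiv ℝ (fun y => F (s,y)) x v)
      =ᶠ[𝓝 t] fun s => fderiv ℝ F (s,x) (0,v) := by
    filter_upwards [Ioi_mem_nhds ht] with s hs
    exact fderiv_space_apply F ((hF (s,x) hs).differentiableAt ne0top) v
  have hdiff : DifferentiableAt ℝ (fun s => fderiv ℝ (fun y => F (s,y)) x v) t := by
    rw [h1.differentiableAt_iff]
    exact ((diff_fderiv_apply F (hF (t,x) ht) _).hasFDerivAt.comp t
      (hasFDerivAt_prodMk_left (𝕜 := ℝ) t x)).differentiableAt
  have := hdiff.hasDerivAt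
  rwa [schwarz F hF ht x v] at this

lemma hasDerivAt_Lop_time (V : Esp d → Esp d) (F : ℝ × Esp d → ℝ)
    (hF : ∀ p : ℝ × Esp d, 0 < p.1 → ContDiffAt ℝ S F p)
    {t : ℝ} (ht : 0 < t) (x : Esp d) :
    HasDerivAt (fun s => Lop V (fun y => F (s,y)) x)
      (Lop V (fun y => deriv (fun s => F (s,y)) t) x) t := by
  have hlap : ∀ i : Fin d,
      HasDerivAt (fun s => fderiv ℝ (fun y => fderiv ℝ (fun y' => F (s,y')) y (e i)) x (e i))
        (fderiv ℝ (fun y => fderiv ℝ (fun y' => deriv (fun s => F (s,y')) t) y (e i)) x (e i))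
        t := by
    intro i
    have h := schwarz' (fun p : ℝ × Esp d => fderiv ℝ (fun y' => F (p.1, y')) p.2 (e i))
      (smoothH F hF (e i)) ht x (e i)
    have hg : (fun y => deriv (fun s =>
          (fun p : ℝ × Esp d => fderiv ℝ (fun y' => F (p.1, y')) p.2 (e i)) (s, y)) t)
        = fun y => fderiv ℝ (fun y' => deriv (fun s => F (s,y')) t) y (e i) :=
      funext fun y => schwarz F hF ht y (e i)
    rw [hg] at h
    exact h
  have hsum := HasDerivAt.sum (u := Finset.univ) (fun i _ => hlap i)
  have hinner := schwarz' F hF ht x (V x)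
  have htot := hsum.add hinner
  have hfun : (fun s => Lop V (fun y => F (s,y)) x)
      = fun s => (∑ i, fderiv ℝ (fun y => fderiv ℝ (fun y' => F (s,y')) y (e i)) x (e i))
          + fderiv ℝ (fun y => F (s,y)) x (V x) := by
    funext s
    show lap (fun y => F (s,y)) x + (inner ℝ (V x) (gradient (fun y => F (s,y)) x) : ℝ) = _
    rw [inner_vec_grad]
    rfl
  have hval : Lop V (fun y => deriv (fun s => F (s,y)) t) x
      = (∑ i, fderiv ℝ (fun y => fderiv ℝ (fun y' => deriv (fun s => F (s,y')) t) y (e i)) x (e i))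
          + fderiv ℝ (fun y => deriv (fun s => F (s,y)) t) x (V x) := by
    show lap _ x + (inner ℝ (V x) (gradient _ x) : ℝ) = _
    rw [inner_vec_grad]
    rfl
  rw [hfun, hval]
  refine htot.congr_of_eventuallyEq (Filter.Eventually.of_forall fun s => ?_)
  rw [Pi.add_apply, Finset.sum_apply]

/-- Evolution equation for `Z = X − Y = −Lf`: `(A − ∂_t)Z = 2Γ₂(f) + (m−1)Z²`. -/
theorem evolution_equation_Z
    {d : ℕ} (hd : 1 ≤ d) (V : Esp d → Esp d) (hV : ContDiff ℝ (⊤ : ℕ∞) V)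
    (m : ℝ) (hm0 : 0 < m) (hm1 : m ≠ 1)
    (u : ℝ → Esp d → ℝ)
    (hu_smooth : ContDiffOn ℝ (⊤ : ℕ∞) (fun p : ℝ × Esp d => u p.1 p.2) (Set.Ioi 0 ×ˢ Set.univ))
    (hu_pos : ∀ t, 0 < t → ∀ x, 0 < u t x)
    (hu_pde : ∀ t, 0 < t → ∀ x,
      deriv (fun s => u s x) t = Lop V (fun y => u t y ^ m) x)
    (f U X Y : ℝ → Esp d → ℝ)
    (hf : ∀ t x, f t x = m * (u t x ^ (m-1) - 1) / (m-1))
    (hU : ∀ t x, U t x = (m-1) * f t x + m)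
    (hX : ∀ t x, X t x = ‖gradient (f t) x‖^2 / U t x)
    (hY : ∀ t x, Y t x = deriv (fun s => f s x) t / U t x)
    (Z : ℝ → Esp d → ℝ) (hZ : ∀ t x, Z t x = X t x - Y t x) :
    ∀ t, 0 < t → ∀ x : Esp d,
      (Z t x = -(Lop V (f t) x)) ∧
      (Aop V m (U t) (f t) (Z t) x - deriv (fun s => Z s x) t
        = 2 * Gamma2 V (f t) x + (m-1) * (Z t x)^2) := by
  have hm1' : m - 1 ≠ 0 := sub_ne_zero.mpr hm1
  -- space-time smoothness
  have hFu : ∀ p : ℝ × Esp d, 0 < p.1 → ContDiffAt ℝ S (fun p : ℝ × Esp d => u p.1 p.2) p := by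
    intro p hp
    exact (hu_smooth.contDiffAt (((isOpen_Ioi.prod isOpen_univ)).mem_nhds
      ⟨hp, trivial⟩)).of_le (by simp)
  have hFsm : ∀ p : ℝ × Esp d, 0 < p.1 → ContDiffAt ℝ S (fun p : ℝ × Esp d => f p.1 p.2) p := by
    intro p hp
    have h1 : (fun p : ℝ × Esp d => f p.1 p.2)
        = fun p : ℝ × Esp d => m * ((fun q : ℝ × Esp d => u q.1 q.2) p ^ (m-1) - 1) / (m-1) :=
      funext fun p => hf p.1 p.2
    rw [h1]
    exact ((((hFu p hp).rpow_const_of_ne (hu_pos p.1 hp p.2).ne').sub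
      contDiffAt_const).const_smul m).div_const (m-1)
  have hsmF : ∀ t, 0 < t → Sm (f t) := fun t ht y =>
    (hFsm (t,y) ht).comp y (contDiffAt_const.prodMk contDiffAt_id)
  have hsmU : ∀ t, 0 < t → Sm (u t) := fun t ht y =>
    (hFu (t,y) ht).comp y (contDiffAt_const.prodMk contDiffAt_id)
  have hUval : ∀ t x, U t x = m * (u t x) ^ (m-1) := by
    intro t x
    rw [hU, hf]
    field_simp
    ring
  -- the PDE satisfied by f
  have key : ∀ t, 0 < t → ∀ x, deriv (fun s => f s x) t
      = U t x * Lop V (f t) x + ‖gradient (f t) x‖^2 := by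
    intro t ht x
    have hcpos : 0 < u t x := hu_pos t ht x
    have hw : Sm (u t) := hsmU t ht
    have hwpos : ∀ y, 0 < u t y := hu_pos t ht
    have hdu : DifferentiableAt ℝ (fun s => u s x) t := by
      have := (((hFu (t,x) ht).differentiableAt ne0top).comp t
        ((differentiableAt_id (𝕜 := ℝ)).prodMk (differentiableAt_const x)))
      exact this
    have hder : HasDerivAt (fun s => f s x)
        (m * (u t x) ^ (m-2) * deriv (fun s => u s x) t) t := by
      have h0 : HasDerivAt (fun s => u s x) (deriv (fun s => u s x) t) t := hdu.hasDerivAt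
      have h1 := h0.rpow_const (p := m-1) (Or.inl hcpos.ne')
      have h2 := ((h1.sub_const 1).const_mul m).div_const (m-1)
      have h3 : (fun s => f s x) = fun s => m * ((u s x) ^ (m-1) - 1) / (m-1) :=
        funext fun s => hf s x
      rw [h3]
      refine h2.congr_deriv ?_
      rw [show m-1-1 = m-2 by ring]
      field_simp
    have hdu_eq : deriv (fun s => u s x) t = Lop V (fun y => u t y ^ m) x := hu_pde t ht x
    have hLm : Lop V (fun y => u t y ^ m) x
        = m * (u t x) ^ (m-1) * Lop V (u t) x
          + m * (m-1) * (u t x) ^ (m-2) * ∑ i, (fderiv ℝ (u t) x (e i))^2 :=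
      Lop_rpow hw hwpos m x
    have hftfun : f t = fun y => (m/(m-1)) * (u t y ^ (m-1)) + (-(m/(m-1))) := by
      funext y
      rw [hf]
      field_simp
      ring
    have hLf : Lop V (f t) x = (m/(m-1)) * ((m-1) * (u t x) ^ (m-2) * Lop V (u t) x
        + (m-1)*(m-2) * (u t x) ^ (m-3) * ∑ i, (fderiv ℝ (u t) x (e i))^2) := by
      rw [hftfun, Lop_affine (hw.rpow hwpos (m-1)) (m/(m-1)) (-(m/(m-1))) x,
        Lop_rpow hw hwpos (m-1) x, show m-1-1 = m-2 by ring, show m-1-2 = m-3 by ring]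
    have hgradf : ‖gradient (f t) x‖^2
        = (m * (u t x)^(m-2))^2 * ∑ i, (fderiv ℝ (u t) x (e i))^2 := by
      rw [norm_sq_grad, Finset.mul_sum]
      refine Finset.sum_congr rfl fun i _ => ?_
      rw [hftfun, fderiv_affine (hw.rpow hwpos (m-1)) (m/(m-1)) (-(m/(m-1))) x,
        fderiv_rpow hw hwpos (m-1) x, show m-1-1 = m-2 by ring]
      field_simp
    have eA : (u t x)^(m-1) = (u t x)^(m-3) * u t x * u t x := by
      rw [show m-1 = (m-3)+1+1 by ring, Real.rpow_add hcpos, Real.rpow_add hcpos,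
        Real.rpow_one]
    have eB : (u t x)^(m-2) = (u t x)^(m-3) * u t x := by
      rw [show m-2 = (m-3)+1 by ring, Real.rpow_add hcpos, Real.rpow_one]
    rw [hder.deriv, hdu_eq, hLm, hUval, hLf, hgradf, eA, eB]
    field_simp
    ring
  -- Part (i)
  have partI : ∀ t, 0 < t → ∀ x, Z t x = -(Lop V (f t) x) := by
    intro t ht x
    have hUpos : 0 < U t x := by
      rw [hUval]
      exact mul_pos hm0 (Real.rpow_pos_of_pos (hu_pos t ht x) _)
    rw [hZ, hX, hY, key t ht x]
    field_simp
    ring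
  intro t ht x
  refine ⟨partI t ht x, ?_⟩
  have hft : Sm (f t) := hsmF t ht
  have hl : Sm (Lop V (f t)) := hft.lop hV
  have hUt_eq : U t = fun y => (m-1) * f t y + m := funext fun y => hU t y
  have hUsm : Sm (U t) := by rw [hUt_eq]; exact hft.const_mul_add (m-1) m
  have hZt_eq : Z t = fun y => (-1) * Lop V (f t) y + 0 := funext fun y => by
    rw [partI t ht y]; ring
  set Sig := ∑ i, fderiv ℝ (f t) x (e i) * fderiv ℝ (Lop V (f t)) x (e i) with hSig
  -- Aop expansion
  have hA : Aop V m (U t) (f t) (Z t) x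
      = U t x * ((-1) * Lop V (Lop V (f t)) x) + 2*m*((-1) * Sig) := by
    have h1 : Lop V (Z t) x = (-1) * Lop V (Lop V (f t)) x := by
      rw [hZt_eq]; exact Lop_affine hl (-1) 0 x
    have h2 : (inner ℝ (gradient (f t) x) (gradient (Z t) x) : ℝ) = (-1) * Sig := by
      rw [inner_grads, hSig, Finset.mul_sum]
      refine Finset.sum_congr rfl fun i _ => ?_
      rw [hZt_eq, fderiv_affine hl (-1) 0 x]
      ring
    show U t x * Lop V (Z t) x + 2*m*(inner ℝ (gradient (f t) x) (gradient (Z t) x):ℝ) = _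
    rw [h1, h2]
  -- time derivative of Z
  set g : Esp d → ℝ := fun y => deriv (fun s => f s y) t with hgdef
  have hbZ : deriv (fun s => Z s x) t = (-1) * Lop V g x := by
    have hEv : (fun s => Z s x) =ᶠ[𝓝 t] fun s => (-1) * Lop V (f s) x := by
      filter_upwards [Ioi_mem_nhds ht] with s hs
      rw [partI s hs x]; ring
    rw [hEv.deriv_eq]
    have h0 : HasDerivAt (fun s => Lop V (f s) x) (Lop V g x) t :=
      hasDerivAt_Lop_time V (fun p : ℝ × Esp d => f p.1 p.2) hFsm ht x
    exact (h0.const_mul (-1)).deriv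
  -- expand Lop V g x
  have hg_eq : g = fun y => U t y * Lop V (f t) y + ‖gradient (f t) y‖^2 :=
    funext fun y => key t ht y
  have hnsm : Sm (fun y => ‖gradient (f t) y‖^2) := by
    have hfun : (fun y => ‖gradient (f t) y‖^2)
        = fun y => ∑ i, (fderiv ℝ (f t) y (e i))^2 := funext fun y => norm_sq_grad (f t) y
    rw [hfun]
    exact Sm.sum fun i _ => fun y => ((hft.fderiv_apply (e i)) y).pow 2
  have hLU : Lop V (U t) x = (m-1) * Lop V (f t) x := by
    rw [hUt_eq]; exact Lop_affine hft (m-1) m x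
  have hc1 : Lop V (fun y => U t y * Lop V (f t) y) x
      = U t x * Lop V (Lop V (f t)) x
        + Lop V (f t) x * ((m-1) * Lop V (f t) x) + 2 * ((m-1) * Sig) := by
    rw [Lop_mul hUsm hl x, hLU]
    have hsum : ∑ i, fderiv ℝ (U t) x (e i) * fderiv ℝ (Lop V (f t)) x (e i)
        = (m-1) * Sig := by
      rw [hSig, Finset.mul_sum]
      refine Finset.sum_congr rfl fun i _ => ?_
      rw [hUt_eq, fderiv_affine hft (m-1) m x]
      ring
    rw [hsum]
  have hc2 : Lop V (fun y => ‖gradient (f t) y‖^2) x = 2 * Gamma2 V (f t) x + 2 * Sig := by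
    have hdef : Gamma2 V (f t) x = (1/2) * Lop V (fun y => ‖gradient (f t) y‖^2) x
        - (inner ℝ (gradient (f t) x) (gradient (Lop V (f t)) x) : ℝ) := rfl
    have h3 : (inner ℝ (gradient (f t) x) (gradient (Lop V (f t)) x) : ℝ) = Sig :=
      inner_grads (f t) (Lop V (f t)) x
    rw [h3] at hdef
    linarith
  have hLg : Lop V g x = (U t x * Lop V (Lop V (f t)) x
        + Lop V (f t) x * ((m-1) * Lop V (f t) x) + 2 * ((m-1) * Sig))
      + (2 * Gamma2 V (f t) x + 2 * Sig) := by
    calc Lop V g x = Lop V (fun y => U t y * Lop V (f t) y + ‖gradient (f t) y‖^2) x := by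
          rw [hg_eq]
      _ = Lop V (fun y => U t y * Lop V (f t) y) x
          + Lop V (fun y => ‖gradient (f t) y‖^2) x :=
          Lop_add (hUsm.mul hl) hnsm x
      _ = _ := by rw [hc1, hc2]
  rw [hA, hbZ, hLg, partI t ht x]
  ring
end
end
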